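/- For all positive integers n and 0 ≤ i ≤ n, the polynomial ∑ t^{exc(π)}, summed over even (resp. odd) permutations of S_n with exactly i fixed points, is gamma positive with center of symmetry (n-i)/2. -/

import Mathlib

/-!
Write `P(n, i, s)` for the excedance polynomial of the permutations of `n` letters with `i` fixed
points and sign `s`. Inserting a new letter `0` into a permutation `σ` of `n` letters, either as a
fixed point or by sending `0` to `y + 1` and `σ⁻¹ y + 1` to `0`, is a bijection
(`Equiv.Perm.decomposeFin`); the second kind of insertion flips the sign and raises the number of
excedances by `1`, `0` or `1` according as `σ⁻¹ y` is a fixed point, an excedance or an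
anti-excedance of `σ`. Hence
`P(n+1, i, s) = P(n, i-1, s) + (i+1) t P(n, i+1, -s) + T_{n-i} P(n, i, -s)` with
`T_m f = t(1-t) f' + m t f`, since `T_m t^e = e t^e + (m-e) t^{e+1}`.

Both `f ↦ t f` (from `m` to `m + 2`) and `T_m` (from `m` to `m + 1`) preserve the cone spanned by
the `t^a (1+t)^b` with `2a + b = m`, because
`T_{2a+b} (t^a (1+t)^b) = a t^a (1+t)^{b+1} + 2b t^{a+1} (1+t)^{b-1}`.
So by induction on `n` every `P(n, i, s)` lies in the cone for `m = n - i`.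
-/

open Finset Polynomial

/-- Number of excedances of a permutation of `{0,…,n-1}`. -/
def excA {n : ℕ} (π : Equiv.Perm (Fin n)) : ℕ :=
  (Finset.univ.filter (fun i => i < π i)).card

/-- Number of inversions. -/
def invA {n : ℕ} (π : Equiv.Perm (Fin n)) : ℕ :=
  (Finset.univ.filter (fun p : Fin n × Fin n => p.1 < p.2 ∧ π p.2 < π p.1)).card

/-- Number of fixed points. -/
def fixA {n : ℕ} (π : Equiv.Perm (Fin n)) : ℕ :=
  (Finset.univ.filter (fun j => π j = j)).card

/-- `f` is gamma positive with parameters `r ≤ N`: it has an expansion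
`f = ∑ γ_i t^{r+i}(1+t)^{N-r-2i}` with `γ_i ≥ 0`; its center of symmetry is `(N+r)/2`. -/
def IsGammaPos (f : Polynomial ℚ) (r N : ℕ) : Prop :=
  r ≤ N ∧ ∃ γ : ℕ → ℚ, (∀ i, 0 ≤ γ i) ∧
    f = ∑ i ∈ Finset.range ((N - r) / 2 + 1),
      Polynomial.C (γ i) * Polynomial.X ^ (r + i) * (1 + Polynomial.X) ^ (N - r - 2 * i)

/-- `f` is gamma positive with center of symmetry `c/2` (in half-integral units). -/
def GammaPosCenter (f : Polynomial ℚ) (c : ℕ) : Prop :=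
  ∃ r N : ℕ, N + r = c ∧ IsGammaPos f r N

open Equiv Equiv.Perm

lemma sum_ite_eq_zero_add {ι M : Type*} [Fintype ι] [DecidableEq ι] [AddCommMonoid M]
    (f : ι → M) (z : ι) : (∑ x, if x = z then 0 else f x) + f z = ∑ x, f x := by
  have : (fun x => if x = z then 0 else f x) = Function.update f z 0 := by
    ext x; simp [Function.update_apply]
  rw [this, Finset.sum_update_of_mem (mem_univ z), zero_add, Finset.sdiff_singleton_eq_erase,
    Finset.sum_erase_add _ _ (mem_univ z)]

section Statistics

variable {n : ℕ}

lemma sign_eq_neg_one_pow_invA (σ : Perm (Fin n)) : sign σ = (-1) ^ invA σ := by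
  rw [sign_eq_prod_prod_Iio, invA, ← Finset.prod_const, Finset.prod_filter,
    Fintype.prod_prod_type, Finset.prod_comm]
  refine Finset.prod_congr rfl fun j _ => ?_
  rw [← Finset.filter_gt_eq_Iio, Finset.prod_filter]
  refine Finset.prod_congr rfl fun i _ => ?_
  rcases lt_trichotomy i j with h | rfl | h
  · have : σ i ≠ σ j := σ.injective.ne h.ne
    by_cases h' : σ i < σ j
    · simp [h, h', h'.not_gt]
    · simp [h, h', lt_of_le_of_ne (not_lt.1 h') this.symm]
  · simp
  · simp [h.not_gt]

lemma even_invA_iff (σ : Perm (Fin n)) : Even (invA σ) ↔ sign σ = 1 := by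
  rw [sign_eq_neg_one_pow_invA, neg_one_pow_eq_one_iff_even (by decide)]

lemma excA_eq_sum (σ : Perm (Fin n)) : excA σ = ∑ x, if x < σ x then 1 else 0 :=
  card_filter _ _

lemma fixA_eq_sum (σ : Perm (Fin n)) : fixA σ = ∑ x, if σ x = x then 1 else 0 :=
  card_filter _ _

lemma decomposeFin_symm_zero_apply_succ (σ : Perm (Fin n)) (x : Fin n) :
    decomposeFin.symm (0, σ) x.succ = (σ x).succ := by
  simp [decomposeFin_symm_apply_succ]

lemma decomposeFin_symm_succ_apply_succ (σ : Perm (Fin n)) (z x : Fin n) :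
    decomposeFin.symm ((σ z).succ, σ) x.succ = if x = z then 0 else (σ x).succ := by
  rw [decomposeFin_symm_apply_succ, swap_apply_def]
  simp [σ.injective.eq_iff, Fin.succ_ne_zero]

lemma excA_decomposeFin_symm_zero (σ : Perm (Fin n)) :
    excA (decomposeFin.symm (0, σ)) = excA σ := by
  rw [excA_eq_sum, Fin.sum_univ_succ, excA_eq_sum]
  simp only [decomposeFin_symm_apply_zero, decomposeFin_symm_zero_apply_succ,
    Fin.succ_lt_succ_iff, lt_irrefl, if_false, zero_add]

lemma fixA_decomposeFin_symm_zero (σ : Perm (Fin n)) :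
    fixA (decomposeFin.symm (0, σ)) = fixA σ + 1 := by
  rw [fixA_eq_sum, Fin.sum_univ_succ, fixA_eq_sum, add_comm]
  simp only [decomposeFin_symm_apply_zero, decomposeFin_symm_zero_apply_succ,
    Fin.succ_inj, if_true]

lemma excA_decomposeFin_symm_succ (σ : Perm (Fin n)) (z : Fin n) :
    excA (decomposeFin.symm ((σ z).succ, σ)) + (if z < σ z then 1 else 0) = excA σ + 1 := by
  have hx (x : Fin n) : (if x.succ < decomposeFin.symm ((σ z).succ, σ) x.succ then 1 else 0) =
      if x = z then 0 else if x < σ x then 1 else 0 := by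
    rw [decomposeFin_symm_succ_apply_succ]
    split_ifs <;> simp_all [Fin.succ_lt_succ_iff]
  rw [excA_eq_sum, Fin.sum_univ_succ, Finset.sum_congr rfl fun x _ => hx x, excA_eq_sum,
    ← sum_ite_eq_zero_add (fun x => if x < σ x then 1 else 0) z, decomposeFin_symm_apply_zero,
    if_pos (Fin.succ_pos _)]
  ring

lemma fixA_decomposeFin_symm_succ (σ : Perm (Fin n)) (z : Fin n) :
    fixA (decomposeFin.symm ((σ z).succ, σ)) + (if σ z = z then 1 else 0) = fixA σ := by
  have hx (x : Fin n) : (if decomposeFin.symm ((σ z).succ, σ) x.succ = x.succ then 1 else 0) =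
      if x = z then 0 else if σ x = x then 1 else 0 := by
    rw [decomposeFin_symm_succ_apply_succ]
    split_ifs <;> simp_all [(Fin.succ_ne_zero _).symm]
  rw [fixA_eq_sum, Fin.sum_univ_succ, Finset.sum_congr rfl fun x _ => hx x, fixA_eq_sum,
    ← sum_ite_eq_zero_add (fun x => if σ x = x then 1 else 0) z, decomposeFin_symm_apply_zero,
    if_neg (Fin.succ_ne_zero _), zero_add]

def aexcA (σ : Perm (Fin n)) : ℕ :=
  #{x | σ x < x}

lemma sum_ite_fixed_excedance {M : Type*} [AddCommMonoid M] (σ : Perm (Fin n)) (A B D : M) :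
    ∑ x, (if σ x = x then A else if x < σ x then B else D) =
      fixA σ • A + excA σ • B + aexcA σ • D := by
  have h (x : Fin n) : (if σ x = x then A else if x < σ x then B else D) =
      ((if σ x = x then A else 0) + if x < σ x then B else 0) + if σ x < x then D else 0 := by
    rcases lt_trichotomy x (σ x) with h | h | h
    · simp [h, h.ne', h.not_gt]
    · simp [← h]
    · simp [h, h.ne, h.not_gt]
  simp only [Finset.sum_congr rfl fun x _ => h x, Finset.sum_add_distrib, ← Finset.sum_filter,
    Finset.sum_const, fixA, excA, aexcA]

lemma fixA_add_excA_add_aexcA (σ : Perm (Fin n)) : fixA σ + excA σ + aexcA σ = n := by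
  simpa using (sum_ite_fixed_excedance σ (1 : ℕ) 1 1).symm

lemma fixA_le (σ : Perm (Fin n)) : fixA σ ≤ n :=
  (card_filter_le _ _).trans_eq (card_fin n)

end Statistics

noncomputable def eulerianOp (m : ℕ) : ℚ[X] →ₗ[ℚ] ℚ[X] :=
  LinearMap.mulLeft ℚ (X * (1 - X)) ∘ₗ derivative + (m : ℚ) • LinearMap.mulLeft ℚ X

lemma eulerianOp_apply (m : ℕ) (f : ℚ[X]) :
    eulerianOp m f = X * (1 - X) * derivative f + (m : ℚ[X]) * X * f := by
  simp [eulerianOp, Polynomial.smul_eq_C_mul, mul_assoc]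

lemma eulerianOp_X_pow (e k : ℕ) : eulerianOp (e + k) (X ^ e) = e • X ^ e + k • X ^ (e + 1) := by
  rcases e with _ | e
  · simp [eulerianOp_apply]
  · simp only [eulerianOp_apply, derivative_X_pow, nsmul_eq_mul, map_natCast]
    push_cast
    ring

lemma eulerianOp_X_pow_mul_one_add_X_pow (a b : ℕ) :
    eulerianOp (2 * a + b) (X ^ a * (1 + X) ^ b) =
      a • (X ^ a * (1 + X) ^ (b + 1)) + (2 * b) • (X ^ (a + 1) * (1 + X) ^ (b - 1)) := by
  rcases a with _ | a <;> rcases b with _ | b <;>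
    simp [eulerianOp_apply, derivative_mul, derivative_pow, nsmul_eq_mul] <;> ring

-- The generator `(1 + t) ^ m` is left out for `m > 0`: a permutation moving some letter has an
-- excedance, so its excedance polynomial has no constant term.
noncomputable def derangementGammaCone (m : ℕ) : PointedCone ℚ ℚ[X] :=
  PointedCone.hull ℚ {p | ∃ a b, 2 * a + b = m ∧ (a = 0 → b = 0) ∧ p = X ^ a * (1 + X) ^ b}

lemma X_pow_mul_mem_derangementGammaCone {a b : ℕ} (h : a = 0 → b = 0) :
    X ^ a * (1 + X) ^ b ∈ derangementGammaCone (2 * a + b) :=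
  PointedCone.subset_hull ⟨a, b, rfl, h, rfl⟩

lemma derangementGammaCone_le_comap {m m' : ℕ} (L : ℚ[X] →ₗ[ℚ] ℚ[X])
    (h : ∀ a b, 2 * a + b = m → (a = 0 → b = 0) →
      L (X ^ a * (1 + X) ^ b) ∈ derangementGammaCone m') :
    derangementGammaCone m ≤ (derangementGammaCone m').comap L :=
  Submodule.span_le.2 fun _ ⟨a, b, hm, h0, hp⟩ => hp ▸ h a b hm h0

lemma X_mul_mem_derangementGammaCone {m : ℕ} {f : ℚ[X]} (hf : f ∈ derangementGammaCone m) :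
    X * f ∈ derangementGammaCone (m + 2) := by
  refine derangementGammaCone_le_comap (LinearMap.mulLeft ℚ X) (fun a b hm _ => ?_) hf
  have h := X_pow_mul_mem_derangementGammaCone (a := a + 1) (b := b) (by simp)
  rw [pow_succ', mul_assoc, show 2 * (a + 1) + b = m + 2 by omega] at h
  exact h

lemma eulerianOp_mem_derangementGammaCone {m : ℕ} {f : ℚ[X]} (hf : f ∈ derangementGammaCone m) :
    eulerianOp m f ∈ derangementGammaCone (m + 1) := by
  refine derangementGammaCone_le_comap (eulerianOp m) (fun a b hm h0 => ?_) hf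
  subst hm
  rw [eulerianOp_X_pow_mul_one_add_X_pow]
  rcases Nat.eq_zero_or_pos a with rfl | ha
  · simp [h0 rfl]
  refine add_mem (Submodule.smul_of_tower_mem _ _ ?_) ?_
  · exact X_pow_mul_mem_derangementGammaCone (b := b + 1) (by omega)
  rcases b with _ | b
  · simp
  refine Submodule.smul_of_tower_mem _ _ ?_
  have h := X_pow_mul_mem_derangementGammaCone (a := a + 1) (b := b) (by simp)
  rwa [show 2 * (a + 1) + b = 2 * a + (b + 1) + 1 by omega] at h

-- `IsGammaPos f r N` is `r ≤ N ∧ f ∈ gammaCone r N`.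
noncomputable def gammaCone (r N : ℕ) : PointedCone ℚ ℚ[X] where
  carrier := {f | ∃ γ : ℕ → ℚ, (∀ i, 0 ≤ γ i) ∧ f = ∑ i ∈ range ((N - r) / 2 + 1),
      C (γ i) * X ^ (r + i) * (1 + X) ^ (N - r - 2 * i)}
  zero_mem' := ⟨0, fun _ => le_rfl, by simp⟩
  add_mem' := by
    rintro _ _ ⟨γ, hγ, rfl⟩ ⟨δ, hδ, rfl⟩
    refine ⟨γ + δ, fun i => add_nonneg (hγ i) (hδ i), ?_⟩
    simp only [Pi.add_apply, map_add, add_mul, sum_add_distrib]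
  smul_mem' := by
    rintro c _ ⟨γ, hγ, rfl⟩
    refine ⟨(c : ℚ) • γ, fun i => mul_nonneg c.2 (hγ i), ?_⟩
    change (c : ℚ) • (_ : ℚ[X]) = _
    simp only [Finset.smul_sum, Polynomial.smul_eq_C_mul, Pi.smul_apply, smul_eq_mul, map_mul,
      mul_assoc]

lemma derangementGammaCone_le_gammaCone {r N : ℕ}
    (h : ∀ a b, 2 * a + b = N + r → (a = 0 → b = 0) → r ≤ a) :
    derangementGammaCone (N + r) ≤ gammaCone r N := by
  refine Submodule.span_le.2 fun _ ⟨a, b, hm, h0, hp⟩ => ?_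
  obtain ⟨i, rfl⟩ : ∃ i, a = r + i := ⟨a - r, by have := h a b hm h0; omega⟩
  refine ⟨fun k => if k = i then 1 else 0, fun k => by positivity, ?_⟩
  rw [hp, Finset.sum_eq_single_of_mem i (by simp; omega) (fun k _ hk => by simp [hk])]
  simp [show N - r - 2 * i = b by omega]

lemma gammaPosCenter_of_mem_derangementGammaCone {m : ℕ} {f : ℚ[X]}
    (hf : f ∈ derangementGammaCone m) : GammaPosCenter f m := by
  rcases m with _ | _ | m
  · exact ⟨0, 0, rfl, le_rfl, derangementGammaCone_le_gammaCone (N := 0) (r := 0) (by omega) hf⟩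
  · exact ⟨0, 1, rfl, zero_le_one,
      derangementGammaCone_le_gammaCone (N := 1) (r := 0) (by omega) hf⟩
  · exact ⟨1, m + 1, rfl, by omega,
      derangementGammaCone_le_gammaCone (N := m + 1) (r := 1) (by omega) hf⟩

noncomputable def excedanceWeight {n : ℕ} (i : ℕ) (s : ℤˣ) (π : Perm (Fin n)) : ℚ[X] :=
  if sign π = s ∧ fixA π = i then X ^ excA π else 0

noncomputable def excedancePoly (n i : ℕ) (s : ℤˣ) : ℚ[X] :=
  ∑ π ∈ univ.filter (fun π : Perm (Fin n) => sign π = s ∧ fixA π = i), X ^ excA π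

lemma excedancePoly_eq_sum (n i : ℕ) (s : ℤˣ) :
    excedancePoly n i s = ∑ π : Perm (Fin n), excedanceWeight i s π :=
  Finset.sum_filter _ _

lemma excedanceWeight_decomposeFin_symm_zero {n i : ℕ} (s : ℤˣ) (σ : Perm (Fin n)) :
    excedanceWeight i s (decomposeFin.symm (0, σ)) =
      if sign σ = s ∧ fixA σ + 1 = i then X ^ excA σ else 0 := by
  simp [excedanceWeight, decomposeFin.symm_sign, fixA_decomposeFin_symm_zero,
    excA_decomposeFin_symm_zero]

lemma excedanceWeight_decomposeFin_symm_succ {n i : ℕ} (s : ℤˣ) (σ : Perm (Fin n)) (z : Fin n) :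
    excedanceWeight i s (decomposeFin.symm ((σ z).succ, σ)) =
      if σ z = z then (if sign σ = -s ∧ fixA σ = i + 1 then X ^ (excA σ + 1) else 0)
      else if z < σ z then excedanceWeight i (-s) σ
      else if sign σ = -s ∧ fixA σ = i then X ^ (excA σ + 1) else 0 := by
  have hsign : sign (decomposeFin.symm ((σ z).succ, σ)) = s ↔ sign σ = -s := by
    rw [decomposeFin.symm_sign, if_neg (Fin.succ_ne_zero _), neg_one_mul, neg_eq_iff_eq_neg]
  have hfix := fixA_decomposeFin_symm_succ σ z
  have hexc := excA_decomposeFin_symm_succ σ z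
  have hzz : σ z = z → ¬ z < σ z := fun h => by simp [h]
  unfold excedanceWeight
  split_ifs at hfix hexc ⊢ <;> simp_all

lemma sum_excedanceWeight_decomposeFin_symm {n : ℕ} (i : ℕ) (s : ℤˣ) (σ : Perm (Fin n)) :
    ∑ p, excedanceWeight i s (decomposeFin.symm (p, σ)) =
      (if sign σ = s ∧ fixA σ + 1 = i then X ^ excA σ else 0) +
        (i + 1) • (X * excedanceWeight (i + 1) (-s) σ) +
        eulerianOp (n - i) (excedanceWeight i (-s) σ) := by
  rw [Fin.sum_univ_succ, excedanceWeight_decomposeFin_symm_zero, add_assoc]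
  congr 1
  rw [← Equiv.sum_comp σ,
    Finset.sum_congr rfl fun z _ => excedanceWeight_decomposeFin_symm_succ s σ z,
    sum_ite_fixed_excedance]
  have hn := fixA_add_excA_add_aexcA σ
  unfold excedanceWeight
  by_cases hs : sign σ = -s
  · by_cases hi : fixA σ = i
    · subst hi
      simp [hs, show n - fixA σ = excA σ + aexcA σ by omega, eulerianOp_X_pow]
    · by_cases hi' : fixA σ = i + 1
      · simp [hs, hi', pow_succ']
      · simp [hs, hi, hi']
  · simp [hs]

lemma excedancePoly_succ (n i : ℕ) (s : ℤˣ) :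
    excedancePoly (n + 1) i s =
      (if i = 0 then 0 else excedancePoly n (i - 1) s) +
        (i + 1) • (X * excedancePoly n (i + 1) (-s)) +
        eulerianOp (n - i) (excedancePoly n i (-s)) := by
  have hfirst : ∑ σ : Perm (Fin n), (if sign σ = s ∧ fixA σ + 1 = i then X ^ excA σ else 0) =
      if i = 0 then 0 else excedancePoly n (i - 1) s := by
    rcases i with _ | i
    · simp
    · simp [excedancePoly_eq_sum, excedanceWeight]
  simp only [excedancePoly_eq_sum, ← decomposeFin.symm.sum_comp, Fintype.sum_prod_type_right,
    sum_excedanceWeight_decomposeFin_symm, Finset.sum_add_distrib, hfirst, Finset.mul_sum,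
    Finset.smul_sum, map_sum]

lemma excedancePoly_eq_zero_of_lt {n i : ℕ} (s : ℤˣ) (h : n < i) : excedancePoly n i s = 0 :=
  Finset.sum_eq_zero fun π hπ => absurd ((mem_filter.1 hπ).2.2 ▸ fixA_le π) (by omega)

theorem excedancePoly_mem_derangementGammaCone (n i : ℕ) (s : ℤˣ) :
    excedancePoly n i s ∈ derangementGammaCone (n - i) := by
  induction n generalizing i s with
  | zero =>
    rw [excedancePoly_eq_sum, Fintype.sum_unique, excedanceWeight]
    split_ifs
    · simpa [excA] using X_pow_mul_mem_derangementGammaCone (a := 0) (b := 0) (fun _ => rfl)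
    · exact zero_mem _
  | succ n ih =>
    rw [excedancePoly_succ]
    refine add_mem (add_mem ?_ (Submodule.smul_of_tower_mem _ _ ?_)) ?_
    · split_ifs with hi
      · exact zero_mem _
      · simpa [show n - (i - 1) = n + 1 - i by omega] using ih (i - 1) s
    · rcases lt_or_ge n (i + 1) with h | h
      · simp [excedancePoly_eq_zero_of_lt _ h]
      · simpa [show n - (i + 1) + 2 = n + 1 - i by omega] using
          X_mul_mem_derangementGammaCone (ih (i + 1) (-s))
    · rcases lt_or_ge n i with h | h
      · simp [excedancePoly_eq_zero_of_lt _ h]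
      · simpa [show n - i + 1 = n + 1 - i by omega] using
          eulerianOp_mem_derangementGammaCone (ih i (-s))

theorem stmt19_general (n i : ℕ) :
    GammaPosCenter
      (∑ π ∈ Finset.univ.filter
          (fun π : Equiv.Perm (Fin n) => Even (invA π) ∧ fixA π = i),
        (Polynomial.X : Polynomial ℚ) ^ excA π) (n - i) ∧
    GammaPosCenter
      (∑ π ∈ Finset.univ.filter
          (fun π : Equiv.Perm (Fin n) => ¬ Even (invA π) ∧ fixA π = i),
        (Polynomial.X : Polynomial ℚ) ^ excA π) (n - i) := by
  constructor
  · convert gammaPosCenter_of_mem_derangementGammaCone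
      (excedancePoly_mem_derangementGammaCone n i 1) using 3
    simp [excedancePoly, even_invA_iff]
  · convert gammaPosCenter_of_mem_derangementGammaCone
      (excedancePoly_mem_derangementGammaCone n i (-1)) using 3
    simp [excedancePoly, even_invA_iff, Int.units_ne_iff_eq_neg]

theorem stmt19 (n i : ℕ) (hn : 1 ≤ n) (hi : i ≤ n) :
    GammaPosCenter
      (∑ π ∈ Finset.univ.filter
          (fun π : Equiv.Perm (Fin n) => Even (invA π) ∧ fixA π = i),
        (Polynomial.X : Polynomial ℚ) ^ excA π) (n - i) ∧
    GammaPosCenter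
      (∑ π ∈ Finset.univ.filter
          (fun π : Equiv.Perm (Fin n) => ¬ Even (invA π) ∧ fixA π = i),
        (Polynomial.X : Polynomial ℚ) ^ excA π) (n - i) :=
  stmt19_general n i
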